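/- arXiv:2504.16716 — 2 statements merged into one kernel-verified Lean document; each statement's English description precedes it below -/
import Mathlib

section
/- Let p be an odd prime, let d be a positive integer dividing p−1, and let a ∈ {1, …, d−1}. Then Γ_p(a/d) · ((p−1)a/d)! ≡ 1 (mod p) in ℤ_p, where (p−1)a/d is a (non-negative) integer. -/
open Filter

/-- Morita's `p`-adic gamma function on natural numbers. -/
noncomputable def padicGammaNat (p : ℕ) [Fact p.Prime] (n : ℕ) : ℤ_[p] :=
  (-1) ^ n * ∏ j ∈ (Finset.Ioo 0 n).filter (fun j => ¬ p ∣ j), (j : ℤ_[p])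

/-- Morita's `p`-adic gamma function, extended to `ℤ_p` by continuity. -/
noncomputable def padicGamma (p : ℕ) [Fact p.Prime] (x : ℤ_[p]) : ℤ_[p] :=
  limUnder ((nhds x).comap (fun n : ℕ => (n : ℤ_[p]))) (padicGammaNat p)

/-!
Over a full period `[n, n + p ^ k)` the factors of `padicGammaNat p` multiply to
`(-1) ^ (p ^ k) * (-1) = 1` modulo `p ^ k`, by Wilson's theorem for the cyclic group
`(ZMod (p ^ k))ˣ`. Hence `padicGammaNat p m ≡ padicGammaNat p n (mod p ^ k)` whenever
`m ≡ n (mod p ^ k)`, so the limit defining `Γ_p(z)` exists and `Γ_p(z) ≡ Γ_p(n)` whenever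
`z ≡ n`. With `m = (p - 1) a / d` one has `d (z + m) = p a`, so `z ≡ p - m (mod p)`, and
`Γ_p(p - m) = (-1) ^ (p - m) (p - 1 - m)!`, which is `1 / m!` modulo `p` by Wilson's theorem.
-/

open Topology Finset Nat

theorem prod_univ_eq_of_inv_eq_self {G : Type*} [CommGroup G] [Fintype G] {u : G}
    (hu : u⁻¹ = u) (hfix : ∀ x : G, x⁻¹ = x → x = 1 ∨ x = u) : ∏ x, x = u := by
  classical
  have : ∏ x ∈ univ.erase u, x = 1 :=
    prod_involution (fun x _ => x⁻¹) (by simp) (fun x hx hx1 hinv => by grind)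
      (fun x hx => mem_erase.2 ⟨fun h => (mem_erase.1 hx).1 (by rw [← inv_inv x, h, hu]),
        mem_univ _⟩) (by simp)
  rw [← insert_erase (mem_univ u), prod_insert (notMem_erase _ _), this, mul_one]

theorem Function.Periodic.prod_Ico_add_eq_prod_range {M : Type*} [CommMonoid M] {f : ℕ → M}
    {a : ℕ} (hf : Function.Periodic f a) (n : ℕ) :
    ∏ j ∈ Ico n (n + a), f j = ∏ j ∈ range a, f j := by
  rw [← Nat.image_Ico_mod n a, prod_image (Nat.mod_injOn_Ico n a)]
  exact prod_congr rfl fun j _ => (hf.map_mod_nat j).symm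

namespace ZMod

theorem prod_units_eq_neg_one {n : ℕ} [NeZero n] [Fact (2 < n)] [IsCyclic (ZMod n)ˣ] :
    ∏ u : (ZMod n)ˣ, (u : ZMod n) = -1 := by
  classical
  have hne : (-1 : (ZMod n)ˣ) ≠ 1 := fun h => neg_one_ne_one (congrArg Units.val h)
  suffices ∏ u : (ZMod n)ˣ, u = -1 by simpa using congrArg Units.val this
  refine prod_univ_eq_of_inv_eq_self (by simp) fun x hx => ?_
  by_contra! hx'
  -- a cyclic group has at most two square roots of unity
  have hsub : ({1, -1, x} : Finset (ZMod n)ˣ) ⊆ univ.filter (· ^ 2 = 1) := by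
    intro y hy
    simp only [mem_insert, mem_singleton] at hy
    rcases hy with rfl | rfl | rfl
    · simp
    · simp
    · simpa [sq, mul_eq_one_iff_eq_inv] using hx.symm
  have := (card_le_card hsub).trans (IsCyclic.card_pow_eq_one_le two_pos)
  rw [card_insert_of_notMem (by simp [hne.symm, hx'.1.symm]),
    card_pair (by simpa [eq_comm] using hx'.2.symm)] at this
  omega

theorem prod_units_eq_prod_filter_range_coprime (n : ℕ) [NeZero n] :
    ∏ u : (ZMod n)ˣ, (u : ZMod n) = ∏ j ∈ range n with j.Coprime n, (j : ZMod n) := by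
  refine prod_nbij (fun u => (u : ZMod n).val) (fun u _ => ?_) (fun u _ v _ h => ?_)
    (fun j hj => ?_) (fun u _ => (natCast_zmod_val _).symm)
  · simpa using ⟨val_lt _, val_coe_unit_coprime u⟩
  · exact Units.ext (val_injective n h)
  · simp only [coe_filter, mem_range, Set.mem_ofPred_eq] at hj
    exact ⟨unitOfCoprime j hj.2, mem_coe.2 (mem_univ _), by simp [val_natCast_of_lt hj.1]⟩

theorem prod_Ico_filter_not_dvd_prime_pow {p k : ℕ} (hp : p.Prime) (hodd : Odd p) (hk : k ≠ 0)
    (n : ℕ) : ∏ j ∈ Ico n (n + p ^ k) with ¬ p ∣ j, (j : ZMod (p ^ k)) = -1 := by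
  have hp2 : p ≠ 2 := hodd.ne_two_of_dvd_nat dvd_rfl
  have : NeZero (p ^ k) := ⟨pow_ne_zero k hp.ne_zero⟩
  have : Fact (2 < p ^ k) := ⟨(hp.two_le.lt_of_ne' hp2).trans_le (Nat.le_self_pow hk p)⟩
  have : IsCyclic (ZMod (p ^ k))ˣ := isCyclic_units_of_prime_pow p hp hp2 k
  have hperiodic : Function.Periodic (fun j => if ¬ p ∣ j then (j : ZMod (p ^ k)) else 1)
      (p ^ k) := fun j => by
    simp only [Nat.dvd_add_left (dvd_pow_self p hk), Nat.cast_add, natCast_self, add_zero]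
  rw [prod_filter, hperiodic.prod_Ico_add_eq_prod_range, ← prod_filter, ← prod_units_eq_neg_one,
    prod_units_eq_prod_filter_range_coprime]
  refine prod_congr (filter_congr fun j _ => ?_) fun _ _ => rfl
  rw [Nat.coprime_pow_right_iff (Nat.pos_of_ne_zero hk), Nat.coprime_comm,
    hp.coprime_iff_not_dvd]

theorem factorial_sub_one_sub_mul_factorial {p : ℕ} [Fact p.Prime] {m : ℕ} (hm : m < p) :
    ((p - 1 - m)! * m ! : ZMod p) = (-1) ^ (m + 1) := by
  have h := congrArg (Nat.cast : ℕ → ZMod p)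
    (Nat.factorial_mul_descFactorial (by omega : m ≤ p - 1))
  rw [Nat.cast_mul, cast_descFactorial hm.le, wilsons_lemma] at h
  have hsign : ((-1 : ZMod p) ^ m) ^ 2 = 1 := by rw [← pow_mul, pow_mul']; simp
  linear_combination (-1) ^ m * h - ((p - 1 - m)! * m ! : ZMod p) * hsign

end ZMod

namespace PadicInt

variable {p : ℕ} [Fact p.Prime]

theorem sub_mem_span_pow_iff_toZModPow_eq {x y : ℤ_[p]} {k : ℕ} :
    x - y ∈ Ideal.span {(p : ℤ_[p]) ^ k} ↔ toZModPow k x = toZModPow k y := by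
  rw [← ker_toZModPow, RingHom.mem_ker, map_sub, sub_eq_zero]

theorem natCast_sub_mem_span_pow_iff_modEq {m n k : ℕ} :
    (m : ℤ_[p]) - n ∈ Ideal.span {(p : ℤ_[p]) ^ k} ↔ m ≡ n [MOD p ^ k] := by
  rw [sub_mem_span_pow_iff_toZModPow_eq, map_natCast, map_natCast, ZMod.natCast_eq_natCast_iff]

theorem sub_mem_span_iff_toZMod_eq {x y : ℤ_[p]} :
    x - y ∈ Ideal.span {(p : ℤ_[p])} ↔ toZMod x = toZMod y := by
  rw [← maximalIdeal_eq_span_p, ← ker_toZMod, RingHom.mem_ker, map_sub, sub_eq_zero]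

theorem toZMod_eq_neg_of_mul_eq {z : ℤ_[p]} {d a m : ℕ} (hd : ¬ p ∣ d)
    (hz : (d : ℤ_[p]) * z = a) (hdm : d * m = (p - 1) * a) : toZMod z = -m := by
  have hd0 : (d : ZMod p) ≠ 0 := by rwa [Ne, ZMod.natCast_eq_zero_iff]
  have hdz := congrArg toZMod hz
  have hdm' := congrArg (Nat.cast : ℕ → ZMod p) hdm
  simp only [map_mul, map_natCast] at hdz
  push_cast [Nat.cast_sub (Fact.out : p.Prime).one_le, ZMod.natCast_self] at hdm'
  refine mul_left_cancel₀ hd0 ?_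
  linear_combination hdz + hdm'

theorem coe_span_pow_eq_closedBall (k : ℕ) :
    (Ideal.span {(p : ℤ_[p]) ^ k} : Set ℤ_[p]) = Metric.closedBall 0 ((p : ℝ)⁻¹ ^ k) := by
  ext x
  simp [← norm_le_pow_iff_mem_span_pow, zpow_neg, inv_pow]

theorem isClosed_span_pow (k : ℕ) : IsClosed (Ideal.span {(p : ℤ_[p]) ^ k} : Set ℤ_[p]) := by
  rw [coe_span_pow_eq_closedBall]
  exact Metric.isClosed_closedBall

theorem hasBasis_nhds_zero_span_pow :
    (𝓝 (0 : ℤ_[p])).HasBasis (fun _ => True)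
      fun k => (Ideal.span {(p : ℤ_[p]) ^ k} : Set ℤ_[p]) := by
  have hp := (Fact.out : p.Prime).one_lt
  simpa only [coe_span_pow_eq_closedBall] using
    Metric.nhds_basis_closedBall_pow (x := (0 : ℤ_[p])) (by positivity)
      (inv_lt_one_of_one_lt₀ (by exact_mod_cast hp))

instance comap_natCast_nhds_neBot (z : ℤ_[p]) :
    (comap ((↑) : ℕ → ℤ_[p]) (𝓝 z)).NeBot :=
  comap_neBot fun t ht => by
    obtain ⟨_, hx, n, rfl⟩ := mem_closure_iff_nhds.1 (denseRange_natCast z) t ht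
    exact ⟨n, hx⟩

theorem eventually_natCast_sub_mem_span_pow (z : ℤ_[p]) (k : ℕ) :
    ∀ᶠ n : ℕ in comap (↑) (𝓝 z),
      (n : ℤ_[p]) - z ∈ Ideal.span {(p : ℤ_[p]) ^ k} := by
  have : Tendsto (fun n : ℕ => (n : ℤ_[p]) - z) (comap (↑) (𝓝 z)) (𝓝 0) := by
    simpa using (tendsto_comap (f := ((↑) : ℕ → ℤ_[p])) (x := 𝓝 z)).sub_const z
  exact this (hasBasis_nhds_zero_span_pow.mem_of_mem trivial)

theorem exists_tendsto_comap_natCast {f : ℕ → ℤ_[p]}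
    (hf : ∀ {k m n : ℕ}, (m : ℤ_[p]) - n ∈ Ideal.span {(p : ℤ_[p]) ^ k} →
      f m - f n ∈ Ideal.span {(p : ℤ_[p]) ^ k}) (z : ℤ_[p]) :
    ∃ L, Tendsto f (comap (↑) (𝓝 z)) (𝓝 L) := by
  refine CompleteSpace.complete ((IsUniformAddGroup.cauchy_map_iff_tendsto _ _).2
    ⟨inferInstance, ?_⟩)
  refine hasBasis_nhds_zero_span_pow.tendsto_right_iff.2 fun k _ => ?_
  filter_upwards [(eventually_natCast_sub_mem_span_pow z k).prod_mk
    (eventually_natCast_sub_mem_span_pow z k)] with ⟨m, n⟩ ⟨hm, hn⟩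
  exact hf (by simpa using Ideal.sub_mem _ hm hn)

theorem limUnder_comap_natCast_sub_mem {f : ℕ → ℤ_[p]}
    (hf : ∀ {k m n : ℕ}, (m : ℤ_[p]) - n ∈ Ideal.span {(p : ℤ_[p]) ^ k} →
      f m - f n ∈ Ideal.span {(p : ℤ_[p]) ^ k}) {z : ℤ_[p]} {n k : ℕ}
    (h : z - n ∈ Ideal.span {(p : ℤ_[p]) ^ k}) :
    limUnder (comap (↑) (𝓝 z)) f - f n ∈ Ideal.span {(p : ℤ_[p]) ^ k} := by
  refine ((isClosed_span_pow k).preimage (continuous_sub_right (f n))).mem_of_tendsto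
    (tendsto_nhds_limUnder (exists_tendsto_comap_natCast hf z)) ?_
  filter_upwards [eventually_natCast_sub_mem_span_pow z k] with m hm
  exact hf (by simpa using Ideal.add_mem _ hm h)

end PadicInt

section padicGamma

variable {p : ℕ} [Fact p.Prime]

theorem padicGammaNat_eq_prod_range (n : ℕ) :
    padicGammaNat p n = (-1) ^ n * ∏ j ∈ range n with ¬ p ∣ j, (j : ℤ_[p]) := by
  rw [padicGammaNat]
  congr 1
  refine prod_congr (ext fun j => ?_) fun _ _ => rfl
  simp only [mem_filter, mem_Ioo, mem_range]
  rcases j.eq_zero_or_pos with rfl | hj <;> simp [*]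

theorem padicGammaNat_add (n q : ℕ) :
    padicGammaNat p (n + q) =
      padicGammaNat p n * ((-1) ^ q * ∏ j ∈ Ico n (n + q) with ¬ p ∣ j, (j : ℤ_[p])) := by
  simp only [padicGammaNat_eq_prod_range, prod_filter, pow_add,
    ← prod_range_mul_prod_Ico _ (Nat.le_add_right n q)]
  ring

theorem toZModPow_padicGammaNat_add_prime_pow (hodd : Odd p) (k n : ℕ) :
    PadicInt.toZModPow k (padicGammaNat p (n + p ^ k)) =
      PadicInt.toZModPow k (padicGammaNat p n) := by
  rcases eq_or_ne k 0 with rfl | hk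
  · exact Subsingleton.elim (α := ZMod 1) _ _
  simp [padicGammaNat_add, ZMod.prod_Ico_filter_not_dvd_prime_pow Fact.out hodd hk,
    (hodd.pow (n := k)).neg_one_pow]

theorem padicGammaNat_sub_mem_span_pow (hodd : Odd p) {m n k : ℕ}
    (h : (m : ℤ_[p]) - n ∈ Ideal.span {(p : ℤ_[p]) ^ k}) :
    padicGammaNat p m - padicGammaNat p n ∈ Ideal.span {(p : ℤ_[p]) ^ k} := by
  have hperiodic : Function.Periodic (fun n => PadicInt.toZModPow k (padicGammaNat p n)) (p ^ k) :=
    toZModPow_padicGammaNat_add_prime_pow hodd k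
  rw [PadicInt.sub_mem_span_pow_iff_toZModPow_eq, ← hperiodic.map_mod_nat m,
    ← hperiodic.map_mod_nat n, PadicInt.natCast_sub_mem_span_pow_iff_modEq.1 h]

theorem padicGamma_sub_padicGammaNat_mem_span_pow (hodd : Odd p) {z : ℤ_[p]} {n k : ℕ}
    (h : z - n ∈ Ideal.span {(p : ℤ_[p]) ^ k}) :
    padicGamma p z - padicGammaNat p n ∈ Ideal.span {(p : ℤ_[p]) ^ k} :=
  PadicInt.limUnder_comap_natCast_sub_mem (padicGammaNat_sub_mem_span_pow hodd) h

theorem padicGammaNat_of_le {n : ℕ} (hn : n ≤ p) :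
    padicGammaNat p n = (-1) ^ n * ((n - 1)! : ℤ_[p]) := by
  have hfilter : (Ioo 0 n).filter (fun j => ¬ p ∣ j) = Ioo 0 n :=
    filter_true_of_mem fun j hj hdvd => by
      have := Nat.le_of_dvd (mem_Ioo.1 hj).1 hdvd
      have := (mem_Ioo.1 hj).2
      omega
  rcases n with _ | n
  · simp [padicGammaNat]
  rw [padicGammaNat, hfilter, ← Finset.Ico_add_one_left_eq_Ioo, zero_add, Nat.add_sub_cancel,
    ← prod_Ico_id_eq_factorial, Nat.cast_prod]

theorem padicGammaNat_sub_mul_factorial_sub_one_mem_span (hodd : Odd p) {m : ℕ} (hm : m < p) :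
    padicGammaNat p (p - m) * (m ! : ℤ_[p]) - 1 ∈ Ideal.span {(p : ℤ_[p])} := by
  have hsign : (-1 : ZMod p) ^ (p - m) * (-1) ^ (m + 1) = 1 := by
    rw [← pow_add, show p - m + (m + 1) = p + 1 by omega, hodd.add_one.neg_one_pow]
  rw [PadicInt.sub_mem_span_iff_toZMod_eq, padicGammaNat_of_le (Nat.sub_le p m),
    show p - m - 1 = p - 1 - m by omega]
  simp only [map_mul, map_pow, map_neg, map_one, map_natCast]
  rw [mul_assoc, ZMod.factorial_sub_one_sub_mul_factorial hm, hsign]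

end padicGamma

theorem padicGamma_mul_factorial_cong_one_general (p : ℕ) [Fact p.Prime] (hp : Odd p)
    (d a : ℕ) (hd : 0 < d) (hdvd : d ∣ p - 1) (ha2 : a ≤ d - 1)
    (z : ℤ_[p]) (hz : (d : ℤ_[p]) * z = (a : ℤ_[p])) :
    padicGamma p z * (Nat.factorial ((p - 1) * a / d) : ℤ_[p]) - 1 ∈
      Ideal.span {(p : ℤ_[p])} := by
  have hpp : p.Prime := Fact.out
  set m := (p - 1) * a / d
  have hdm : d * m = (p - 1) * a := Nat.mul_div_cancel' (dvd_mul_of_dvd_left hdvd a)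
  have hmp : m < p := by
    have : m ≤ p - 1 :=
      Nat.div_le_of_le_mul (by rw [mul_comm d]; exact Nat.mul_le_mul_left _ (by omega))
    have := hpp.two_le
    omega
  have hpd : ¬ p ∣ d := by
    have := Nat.le_of_dvd (by have := hpp.two_le; omega) hdvd
    exact Nat.not_dvd_of_pos_of_lt hd (by omega)
  have hzm : z - ((p - m : ℕ) : ℤ_[p]) ∈ Ideal.span {(p : ℤ_[p]) ^ 1} := by
    rw [pow_one, PadicInt.sub_mem_span_iff_toZMod_eq, PadicInt.toZMod_eq_neg_of_mul_eq hpd hz hdm,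
      map_natCast, Nat.cast_sub hmp.le, ZMod.natCast_self, zero_sub]
  have hclose := padicGamma_sub_padicGammaNat_mem_span_pow hp hzm
  rw [pow_one] at hclose
  convert Ideal.add_mem _ (Ideal.mul_mem_right (m ! : ℤ_[p]) _ hclose)
    (padicGammaNat_sub_mul_factorial_sub_one_mem_span hp hmp) using 1
  ring

/-- For `d ∣ p - 1` and `1 ≤ a ≤ d - 1`, one has
`Γ_p(a/d) · ((p-1)a/d)! ≡ 1 (mod p)` in `ℤ_p`. -/
theorem padicGamma_mul_factorial_cong_one (p : ℕ) [Fact p.Prime] (hp : Odd p)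
    (d a : ℕ) (hd : 0 < d) (hdvd : d ∣ p - 1) (ha1 : 1 ≤ a) (ha2 : a ≤ d - 1)
    (z : ℤ_[p]) (hz : (d : ℤ_[p]) * z = (a : ℤ_[p])) :
    padicGamma p z * (Nat.factorial ((p - 1) * a / d) : ℤ_[p]) - 1 ∈
      Ideal.span {(p : ℤ_[p])} :=
  padicGamma_mul_factorial_cong_one_general p hp d a hd hdvd ha2 z hz
end

section
/- Let A be an invertible n × n integer matrix such that the vector q = J A^{−T} (where J = (1,…,1)) has all entries strictly positive and satisfies qJ^T = 1 (equivalently J A^{−T} J^T = 1). Let p be a prime. Suppose c ∈ ℕ^n satisfies c_1 + ⋯ + c_n = p − 1 and cA = (p−1)m for some m ∈ ℤ^n with every entry m_j ≥ 1. Then c = (p−1) J A^{−1}. -/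
/-!
Put `q = J B^{-T}`, so that `B q = Jᵀ`. Pairing `cB` with `q` gives `c · J = |c| = p - 1`, while
`cB ≥ (p - 1) J` entrywise and `q · J = 1`; since `q > 0`, the inequality must be an equality,
so `cB = (p - 1) J` and `c = (p - 1) J B^{-1}`.
-/

open Matrix

namespace Matrix

variable {ι K : Type*} [Fintype ι]

theorem mulVec_vecMul_transpose_nonsing_inv [DecidableEq ι] [CommRing K]
    {B : Matrix ι ι K} (hB : IsUnit B.det) (v : ι → K) :
    B *ᵥ (v ᵥ* Bᵀ⁻¹) = v := by
  rw [← transpose_nonsing_inv, vecMul_transpose, mulVec_mulVec, mul_nonsing_inv _ hB,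
    one_mulVec]

theorem vecMul_vecMul_nonsing_inv [DecidableEq ι] [CommRing K]
    {B : Matrix ι ι K} (hB : IsUnit B.det) (v : ι → K) :
    v ᵥ* B ᵥ* B⁻¹ = v := by
  rw [vecMul_vecMul, mul_nonsing_inv _ hB, vecMul_one]

theorem eq_of_le_of_dotProduct_eq [Ring K] [LinearOrder K] [IsStrictOrderedRing K]
    {q x y : ι → K} (hq : ∀ j, 0 < q j) (hxy : ∀ j, x j ≤ y j) (h : q ⬝ᵥ x = q ⬝ᵥ y) :
    x = y := by
  have hterms := (Finset.sum_eq_sum_iff_of_le fun j _ =>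
    mul_le_mul_of_nonneg_left (hxy j) (hq j).le).1 h
  funext j
  exact mul_left_cancel₀ (hq j).ne' (hterms j (Finset.mem_univ j))

end Matrix

theorem unique_leading_multiindex_general (n p : ℕ)
    (B : Matrix (Fin n) (Fin n) ℚ)
    (hdet : B.det ≠ 0)
    (hqpos : ∀ j, 0 < Matrix.vecMul (fun _ => (1 : ℚ)) (Bᵀ)⁻¹ j)
    (hqsum : ∑ j, Matrix.vecMul (fun _ => (1 : ℚ)) (Bᵀ)⁻¹ j = 1)
    (c : Fin n → ℕ) (hc : ∑ i, c i = p - 1)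
    (m : Fin n → ℤ) (hm : ∀ j, 1 ≤ m j)
    (hcA : ∀ j, Matrix.vecMul (fun i => (c i : ℚ)) B j = ((p - 1 : ℕ) : ℚ) * m j) :
    ∀ i, (c i : ℚ) = ((p - 1 : ℕ) : ℚ) * Matrix.vecMul (fun _ => (1 : ℚ)) B⁻¹ i := by
  set J : Fin n → ℚ := fun _ => 1
  set k : ℚ := ((p - 1 : ℕ) : ℚ)
  set x : Fin n → ℚ := fun i => (c i : ℚ)
  set q := J ᵥ* Bᵀ⁻¹
  have hB : IsUnit B.det := isUnit_iff_ne_zero.mpr hdet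
  have hpair : q ⬝ᵥ (k • J) = q ⬝ᵥ (x ᵥ* B) := calc
    q ⬝ᵥ (k • J) = k * ∑ j, q j := by
      rw [dotProduct_smul, smul_eq_mul]; exact congrArg (k * ·) (dotProduct_one q)
    _ = ∑ i, x i := by rw [hqsum, mul_one, ← Nat.cast_sum, hc]
    _ = x ⬝ᵥ J := (dotProduct_one x).symm
    _ = x ⬝ᵥ (B *ᵥ q) := by rw [mulVec_vecMul_transpose_nonsing_inv hB]
    _ = q ⬝ᵥ (x ᵥ* B) := by rw [dotProduct_mulVec, dotProduct_comm]
  have hle : ∀ j, (k • J) j ≤ (x ᵥ* B) j := fun j => by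
    rw [hcA j, Pi.smul_apply, smul_eq_mul, mul_one]
    exact le_mul_of_one_le_right (Nat.cast_nonneg _) (by exact_mod_cast hm j)
  have hxB : x ᵥ* B = k • J := (eq_of_le_of_dotProduct_eq hqpos hle hpair).symm
  intro i
  show x i = _
  rw [← congrFun (vecMul_vecMul_nonsing_inv hB x) i, hxB, smul_vecMul]
  rfl

/-- If the weight vector `q = J A^{-T}` has positive entries summing to `1`
(Calabi–Yau condition) and `c ∈ ℕ^n` satisfies `|c| = p - 1` with
`cA = (p-1)m`, `m_j ≥ 1`, then `c = (p-1) J A^{-1}`. -/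
theorem unique_leading_multiindex (n p : ℕ) (hp : p.Prime)
    (A : Matrix (Fin n) (Fin n) ℤ)
    (B : Matrix (Fin n) (Fin n) ℚ) (hB : B = A.map (Int.cast : ℤ → ℚ))
    (hdet : B.det ≠ 0)
    (hqpos : ∀ j, 0 < Matrix.vecMul (fun _ => (1 : ℚ)) (Bᵀ)⁻¹ j)
    (hqsum : ∑ j, Matrix.vecMul (fun _ => (1 : ℚ)) (Bᵀ)⁻¹ j = 1)
    (c : Fin n → ℕ) (hc : ∑ i, c i = p - 1)
    (m : Fin n → ℤ) (hm : ∀ j, 1 ≤ m j)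
    (hcA : ∀ j, Matrix.vecMul (fun i => (c i : ℚ)) B j = ((p - 1 : ℕ) : ℚ) * m j) :
    ∀ i, (c i : ℚ) = ((p - 1 : ℕ) : ℚ) * Matrix.vecMul (fun _ => (1 : ℚ)) B⁻¹ i :=
  unique_leading_multiindex_general n p B hdet hqpos hqsum c hc m hm hcA
end
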